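/- Let ℙ be a Bernoulli measure on ∂M and let V : ∂M → M̄ be an exhaustive asynchronous stopping time. Then the shift operator θ_V : ∂M → ∂M, which is defined ℙ-almost surely on ∂M, preserves the measure ℙ and is ergodic. -/

import Mathlib

open MeasureTheory Filter
open scoped ENNReal NNReal

namespace HeapPaper

variable {S : Type}

/-- Commutation pairs of words, generating the trace congruence. -/
def CommRel (I : S → S → Prop) (w₁ w₂ : FreeMonoid S) : Prop :=
  ∃ a b : S, I a b ∧ w₁ = FreeMonoid.of a * FreeMonoid.of b ∧
    w₂ = FreeMonoid.of b * FreeMonoid.of a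

/-- The congruence on the free monoid generated by the commutation of independent pieces. -/
def HeapCon (I : S → S → Prop) : Con (FreeMonoid S) := conGen (CommRel I)

/-- The heap monoid `M(Σ, I)`:  the presented monoid `⟨Σ | ab = ba, (a,b) ∈ I⟩`. -/
def Heap (I : S → S → Prop) := (HeapCon I).Quotient

instance (I : S → S → Prop) : Monoid (Heap I) :=
  inferInstanceAs (Monoid (HeapCon I).Quotient)

/-- The unique additive extension to heaps of a function `φ` defined on pieces. -/
def addExt {A : Type} [AddCommMonoid A] {I : S → S → Prop} (φ : S → A) : Heap I → A :=
  fun x => Multiplicative.toAdd <|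
    (Con.lift (HeapCon I) (FreeMonoid.lift fun a => Multiplicative.ofAdd (φ a))
      (Con.conGen_le.mpr (by
        rintro w₁ w₂ ⟨a, b, hab, rfl, rfl⟩
        exact (Con.ker_rel _).mpr (by simp [map_mul, mul_comm])))) x

/-- The length `|x|` of a heap: the common length of its representative words. -/
def len {I : S → S → Prop} (x : Heap I) : ℕ := addExt (fun _ => 1) x

/-- The number `|x|ₐ` of occurrences of the piece `a` in the heap `x`. -/
def occ {I : S → S → Prop} [DecidableEq S] (a : S) (x : Heap I) : ℕ :=
  addExt (fun b => if b = a then 1 else 0) x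

/-- The additive extension `⟨φ, x⟩` of a real-valued cost function. -/
def pairing {I : S → S → Prop} (φ : S → ℝ) (x : Heap I) : ℝ := addExt φ x

/-- The left-divisibility order on the heap monoid. -/
def hLe {I : S → S → Prop} (x y : Heap I) : Prop := ∃ z : Heap I, y = x * z

/-- Cliques: finite sets of pairwise independent pieces. -/
def Cl (I : S → S → Prop) := {s : Finset S // ∀ a ∈ s, ∀ b ∈ s, a ≠ b → I a b}

/-- The empty clique. -/
def emptyCl (I : S → S → Prop) : Cl I := ⟨∅, by simp⟩

/-- The heap associated with a clique (product of its pieces, in any order). -/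
def Cl.heap {I : S → S → Prop} (γ : Cl I) : Heap I :=
  γ.1.noncommProd (fun a => (HeapCon I).mk' (FreeMonoid.of a)) (by
    intro a ha b hb hab
    have hI : I a b := γ.2 a ha b hb hab
    show (HeapCon I).mk' (FreeMonoid.of a) * (HeapCon I).mk' (FreeMonoid.of b)
        = (HeapCon I).mk' (FreeMonoid.of b) * (HeapCon I).mk' (FreeMonoid.of a)
    rw [← map_mul, ← map_mul]
    exact (Con.eq _).mpr (ConGen.Rel.of _ _ ⟨a, b, hI, rfl, rfl⟩))

/-- The Cartier–Foata move relation `γ → γ'` between cliques. -/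
def Move {I : S → S → Prop} (γ γ' : Cl I) : Prop :=
  ∀ b ∈ γ'.1, ∃ a ∈ γ.1, ¬ I a b

/-- The boundary `∂M`: infinite admissible sequences of nonempty cliques. -/
def Bnd (I : S → S → Prop) :=
  {ξ : ℕ → Cl I // (∀ n, (ξ n).1.Nonempty) ∧ ∀ n, Move (ξ n) (ξ (n + 1))}

/-- `M̄ = M ∪ ∂M`. -/
def MB (I : S → S → Prop) := Heap I ⊕ Bnd I

/-- Partial products of a sequence of cliques. -/
def ppSeq {I : S → S → Prop} (c : ℕ → Cl I) (n : ℕ) : Heap I :=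
  ((List.range n).map fun i => (c i).heap).prod

/-- `c` is the Cartier–Foata decomposition of the heap `x`, padded with empty cliques:
`c` is admissible, eventually empty, with partial products eventually equal to `x`. -/
def CFprop (I : S → S → Prop) (c : ℕ → Cl I) (x : Heap I) : Prop :=
  (∀ n, Move (c n) (c (n + 1))) ∧
    ∃ N, ∀ n, N ≤ n → ppSeq c n = x ∧ c n = emptyCl I

/-- The (padded) Cartier–Foata decomposition of a heap. -/
noncomputable def cf (I : S → S → Prop) (x : Heap I) : ℕ → Cl I :=
  letI := Classical.propDecidable (∃ c, CFprop I c x)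
  if h : ∃ c, CFprop I c x then h.choose else fun _ => emptyCl I

/-- The Cartier–Foata sequence of an element of `M̄`. -/
noncomputable def seqOf {I : S → S → Prop} : MB I → ℕ → Cl I
  | .inl x => cf I x
  | .inr ξ => ξ.1

/-- Partial products of the Cartier–Foata sequence of an element of `M̄`. -/
noncomputable def pp {I : S → S → Prop} (ζ : MB I) (n : ℕ) : Heap I :=
  ppSeq (seqOf ζ) n

/-- The order on `M̄`: `ξ ≤ ξ'` iff `γ₁⋯γₙ ≤ γ'₁⋯γ'ₙ` in `M` for all `n`. -/
noncomputable def mLe {I : S → S → Prop} (ζ ζ' : MB I) : Prop :=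
  ∀ n : ℕ, hLe (pp ζ n) (pp ζ' n)

/-- The elementary cylinder `↑x ⊆ ∂M` of base `x ∈ M`. -/
noncomputable def cyl {I : S → S → Prop} (x : Heap I) : Set (Bnd I) :=
  {ξ : Bnd I | mLe (.inl x) (.inr ξ)}

/-- The σ-algebra `𝔉` on `∂M` generated by the elementary cylinders. -/
noncomputable def Fsa (I : S → S → Prop) : MeasurableSpace (Bnd I) :=
  MeasurableSpace.generateFrom {A : Set (Bnd I) | ∃ x : Heap I, A = cyl x}

noncomputable instance (I : S → S → Prop) : MeasurableSpace (Bnd I) := Fsa I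

/-- `ζ` is the least upper bound in `M̄` of the nondecreasing sequence `(x·γ₁⋯γₙ)ₙ`,
where `(γₙ)` is the Cartier–Foata sequence of `ξ`; this characterizes `x·ξ`. -/
noncomputable def IsConc {I : S → S → Prop} (x : Heap I) (ξ : Bnd I) (ζ : MB I) : Prop :=
  (∀ n : ℕ, mLe (.inl (x * pp (.inr ξ) n)) ζ) ∧
    ∀ η : MB I, (∀ n : ℕ, mLe (.inl (x * pp (.inr ξ) n)) η) → mLe ζ η

/-- The concatenation `x·ξ ∈ ∂M` of a heap `x` and an infinite heap `ξ`. -/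
noncomputable def concB {I : S → S → Prop} (x : Heap I) (ξ : Bnd I) : Bnd I :=
  letI := Classical.propDecidable (∃ ζ : Bnd I, IsConc x ξ (.inr ζ))
  if h : ∃ ζ : Bnd I, IsConc x ξ (.inr ζ) then h.choose else ξ

/-- The difference `ξ − x`: the unique `ζ ∈ ∂M` with `x·ζ = ξ` (junk value if none exists). -/
noncomputable def subB {I : S → S → Prop} (ξ : Bnd I) (x : Heap I) : Bnd I :=
  letI := Classical.propDecidable (∃ ζ : Bnd I, concB x ζ = ξ)
  if h : ∃ ζ : Bnd I, concB x ζ = ξ then h.choose else ξ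

/-- Asynchronous stopping time. -/
noncomputable def IsAST {I : S → S → Prop} (V : Bnd I → MB I) : Prop :=
  (∀ ξ : Bnd I, mLe (V ξ) (.inr ξ)) ∧
    ∀ (ξ ξ' : Bnd I) (x : Heap I), V ξ = .inl x → mLe (.inl x) (.inr ξ') → V ξ' = V ξ

/-- The shift operator `θ_V` associated with an AST `V` (junk: identity outside its domain). -/
noncomputable def shiftV {I : S → S → Prop} (V : Bnd I → MB I) (ξ : Bnd I) : Bnd I :=
  match V ξ with
  | .inl x => subB ξ x
  | .inr _ => ξ

/-- The σ-algebra `𝔉_V` generated by the cylinders of the finite values of `V`. -/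
noncomputable def astSA {I : S → S → Prop} (V : Bnd I → MB I) : MeasurableSpace (Bnd I) :=
  MeasurableSpace.generateFrom
    {A : Set (Bnd I) | ∃ x : Heap I, (∃ ξ : Bnd I, V ξ = .inl x) ∧ A = cyl x}

/-- The iterated sequence `(Vₙ)ₙ` of an AST `V`:  `V₀ = 0` and
`V_{n+1}(ξ) = Vₙ(ξ)·V(ξ − Vₙ(ξ))` if `Vₙ(ξ) ∈ M`, `V_{n+1}(ξ) = ξ` otherwise. -/
noncomputable def iter {I : S → S → Prop} (V : Bnd I → MB I) : ℕ → Bnd I → MB I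
  | 0, _ => .inl 1
  | n + 1, ξ =>
    match iter V n ξ with
    | .inl x =>
      match V (subB ξ x) with
      | .inl y => .inl (x * y)
      | .inr ζ => .inr (concB x ζ)
    | .inr _ => .inr ξ

/-- The increment `Δ_{n+1} = V ∘ θ_{Vₙ}` (junk value outside the domain of `θ_{Vₙ}`). -/
noncomputable def Delta {I : S → S → Prop} (V : Bnd I → MB I) (n : ℕ) (ξ : Bnd I) : MB I :=
  match iter V n ξ with
  | .inl x => V (subB ξ x)
  | .inr _ => .inr ξ

/-- The length of an element of `M̄`, with `|ξ| = ∞` for `ξ ∈ ∂M`. -/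
noncomputable def lenE {I : S → S → Prop} : MB I → ℝ≥0∞
  | .inl x => (len x : ℝ≥0∞)
  | .inr _ => ⊤

/-- `E|V| < ∞`. -/
noncomputable def EVfin {I : S → S → Prop} (P : Measure (Bnd I)) (V : Bnd I → MB I) : Prop :=
  ∫⁻ ξ, lenE (V ξ) ∂P < ⊤

/-- The AST `V` is exhaustive: it is `ℙ`-a.s. finite and `ℙ`-a.s. `ξ = ⋁ₙ Vₙ(ξ)`
(`ξ` is the least upper bound of its iterates). -/
noncomputable def Exhaustive {I : S → S → Prop} (P : Measure (Bnd I)) (V : Bnd I → MB I) : Prop :=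
  (∀ᵐ ξ ∂P, ∃ x : Heap I, V ξ = .inl x) ∧
    ∀ᵐ ξ ∂P, (∀ n : ℕ, mLe (iter V n ξ) (.inr ξ)) ∧
      ∀ ζ : MB I, (∀ n : ℕ, mLe (iter V n ξ) ζ) → mLe (.inr ξ) ζ

/-- `ℙ` is a Bernoulli measure: a probability measure on `(∂M, 𝔉)` that is multiplicative
and positive on elementary cylinders. -/
noncomputable def IsBernoulli {I : S → S → Prop} (P : Measure (Bnd I)) : Prop :=
  IsProbabilityMeasure P ∧
    (∀ x y : Heap I, P (cyl (x * y)) = P (cyl x) * P (cyl y)) ∧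
    ∀ x : Heap I, 0 < P (cyl x)

/-- `ζ` is the greatest lower bound, within the complete lattice `L(ξ)`, of the set
`Hₐ(ξ)` of finite subheaps of `ξ` containing an occurrence of `a`:  this characterizes
the first hitting time of `a`. -/
noncomputable def IsHit {I : S → S → Prop} [DecidableEq S] (a : S) (ξ : Bnd I) (ζ : MB I) :
    Prop :=
  mLe ζ (.inr ξ) ∧
    (∀ x : Heap I, mLe (.inl x) (.inr ξ) → 0 < occ a x → mLe ζ (.inl x)) ∧
    ∀ η : MB I, mLe η (.inr ξ) →
      (∀ x : Heap I, mLe (.inl x) (.inr ξ) → 0 < occ a x → mLe η (.inl x)) → mLe η ζ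

/-- The first hitting time of the piece `a`. -/
noncomputable def hit {I : S → S → Prop} [DecidableEq S] (a : S) (ξ : Bnd I) : MB I :=
  letI := Classical.propDecidable (∃ ζ : MB I, IsHit a ξ ζ)
  if h : ∃ ζ : MB I, IsHit a ξ ζ then h.choose else .inr ξ

/-- A maximal clique: a maximal element of `(𝒞, ≤)`. -/
noncomputable def IsMaxCl {I : S → S → Prop} (γ : Cl I) : Prop :=
  ∀ δ : Cl I, hLe γ.heap δ.heap → δ.heap = γ.heap

/-- The AST cutting an infinite heap at the first occurrence of a maximal clique. -/
noncomputable def Vmax {I : S → S → Prop} (ξ : Bnd I) : MB I :=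
  letI := Classical.propDecidable
  if h : ∃ k : ℕ, IsMaxCl (ξ.1 k) then .inl (ppSeq ξ.1 (Nat.find h + 1)) else .inr ξ

/-- The ergodic mean `⟨φ, x⟩ / |x|` (junk value `0` on infinite heaps). -/
noncomputable def ratioC {I : S → S → Prop} (φ : S → ℝ) : MB I → ℝ
  | .inl x => pairing φ x / (len x : ℝ)
  | .inr _ => 0

/-- The ratio `φ(x)/|x|` for `φ` defined on heaps (junk value `0` on infinite heaps). -/
noncomputable def ratioH {I : S → S → Prop} (φ : Heap I → ℝ) : MB I → ℝ
  | .inl x => φ x / (len x : ℝ)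
  | .inr _ => 0

/-- The set `ℭ` of nonempty cliques. -/
def NCl (I : S → S → Prop) := {γ : Cl I // γ.1.Nonempty}

instance [Fintype S] (I : S → S → Prop) : Finite (Cl I) :=
  inferInstanceAs (Finite {s : Finset S // ∀ a ∈ s, ∀ b ∈ s, a ≠ b → I a b})

instance [Fintype S] (I : S → S → Prop) : Finite (NCl I) :=
  inferInstanceAs (Finite {γ : Cl I // γ.1.Nonempty})

/-- The valuation `f(x) = ℙ(↑x)` associated with `ℙ`. -/
noncomputable def fval {I : S → S → Prop} (P : Measure (Bnd I)) (x : Heap I) : ℝ :=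
  (P (cyl x)).toReal

open Classical in
/-- The Möbius transform `h` of the valuation `f` associated with `ℙ`. -/
noncomputable def mobius {I : S → S → Prop} (P : Measure (Bnd I)) (γ : Cl I) : ℝ :=
  ∑ᶠ γ' : Cl I,
    if hLe γ.heap γ'.heap then (-1 : ℝ) ^ (γ'.1.card - γ.1.card) * fval P γ'.heap else 0

open Classical in
/-- The normalization `g(γ) = Σ_{γ'∈ℭ, γ→γ'} h(γ')`. -/
noncomputable def gnorm {I : S → S → Prop} (P : Measure (Bnd I)) (γ : Cl I) : ℝ :=
  ∑ᶠ γ' : Cl I, if γ'.1.Nonempty ∧ Move γ γ' then mobius P γ' else 0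

open Classical in
/-- The transition matrix of the Markov chain of cliques. -/
noncomputable def Pmat {I : S → S → Prop} (P : Measure (Bnd I)) (γ γ' : Cl I) : ℝ :=
  if Move γ γ' then mobius P γ' / gnorm P γ else 0

/-- `π` is a stationary probability distribution, carried by the nonempty cliques, of the
Markov chain of cliques. -/
noncomputable def IsStationary {I : S → S → Prop} (P : Measure (Bnd I)) (π : Cl I → ℝ) :
    Prop :=
  (∀ γ : Cl I, 0 ≤ π γ) ∧ (π (emptyCl I) = 0) ∧ (∑ᶠ γ : Cl I, π γ = 1) ∧
    ∀ γ' : Cl I, π γ' = ∑ᶠ γ : Cl I, π γ * Pmat P γ γ'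

open Classical in
/-- The nonnegative matrix `B` on `ℭ×ℭ`: `B_{γ,γ'} = f(γ')` if `γ → γ'`, else `0`. -/
noncomputable def Bmat {I : S → S → Prop} (P : Measure (Bnd I)) :
    Matrix (NCl I) (NCl I) ℝ :=
  fun γ γ' => if Move γ.1 γ'.1 then fval P γ'.1.heap else 0

/-- The spectral radius of `B` (as a complex matrix). -/
noncomputable def specRadB [Fintype S] {I : S → S → Prop} (P : Measure (Bnd I)) : ℝ≥0∞ :=
  letI : Fintype (NCl I) := Fintype.ofFinite _
  letI : DecidableEq (NCl I) := Classical.decEq _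
  spectralRadius ℂ ((Bmat P).map (algebraMap ℝ ℂ))

/-- The height `τ(x)` of a heap: the number of cliques in its Cartier–Foata decomposition. -/
noncomputable def height {I : S → S → Prop} (x : Heap I) : ℕ :=
  sInf {N : ℕ | ∀ n, N ≤ n → cf I x n = emptyCl I}

/-- The ratio `|x|/τ(x)` (junk value `0` on infinite heaps). -/
noncomputable def speedRatio {I : S → S → Prop} : MB I → ℝ
  | .inl x => (len x : ℝ) / (height x : ℝ)
  | .inr _ => 0

/-- `ψ ∘ θ_V` extended by `0` outside the domain of `θ_V`. -/
noncomputable def extShift {I : S → S → Prop} (V : Bnd I → MB I) (ψ : Bnd I → ℝ)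
    (η : Bnd I) : ℝ :=
  match V η with
  | .inl _ => ψ (shiftV V η)
  | .inr _ => 0

/-!
The shift `θ_V` cuts `ξ` at the stopping heap `x = V(ξ)`, and the events `{V = x}` are
disjoint elementary cylinders `↑x`. Finite measures on `∂M` are determined by their values on
elementary cylinders, so the multiplicativity `ℙ(↑(y·u)) = ℙ(↑y) ℙ(↑u)` upgrades to the strong
Bernoulli property: on `↑y`, the law of `ξ - y` is `ℙ(↑y) • ℙ`. Summing over the values of `V`
gives `ℙ(θ_V⁻¹ A) = Σₓ ℙ(↑x) ℙ(A) = ℙ(A)`.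

For ergodicity, an invariant set `s` meets the cylinder of a value `u` of an iterate `Vₙ` in
the translate `↑u ∩ (· - u)⁻¹ s`, so `s` is independent of the σ-algebra generated by these
cylinders. Exhaustiveness of `V`, together with the compactness of finite heaps in `M̄`, makes
every elementary cylinder almost surely equal to a set of that σ-algebra. Hence `s` is
independent of every cylinder, then of itself, and `ℙ(s) ∈ {0, 1}`.

The combinatorial input is that Cartier–Foata prefixes are monotone under divisibility, since
appending a piece to a heap only adds it to one clique of the decomposition.
-/

section Development

variable {I : S → S → Prop}
  (hsymm : ∀ a b : S, I a b → I b a) (hirr : ∀ a : S, ¬ I a a)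
  (hCF : ∀ x : Heap I, ∃! c : ℕ → Cl I, CFprop I c x)
  (hconc : ∀ (x : Heap I) (ξ : Bnd I), ∃ ζ : Bnd I, IsConc x ξ (Sum.inr ζ))
  (hconcInj : ∀ (x : Heap I) (ζ ζ' : Bnd I), concB x ζ = concB x ζ' → ζ = ζ')
  (hsubEx : ∀ (x : Heap I) (ξ : Bnd I), ξ ∈ cyl x → ∃ ζ : Bnd I, concB x ζ = ξ)
  {V : Bnd I → MB I} (hV : IsAST V) {P : Measure (Bnd I)}

section Heaps

def piece (I : S → S → Prop) (a : S) : Heap I := (HeapCon I).mk' (FreeMonoid.of a)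

lemma piece_mul_piece_comm {a b : S} (hab : I a b) :
    piece I a * piece I b = piece I b * piece I a := by
  change (HeapCon I).mk' (FreeMonoid.of a) * (HeapCon I).mk' (FreeMonoid.of b)
      = (HeapCon I).mk' (FreeMonoid.of b) * (HeapCon I).mk' (FreeMonoid.of a)
  rw [← map_mul, ← map_mul]
  exact (Con.eq _).mpr (ConGen.Rel.of _ _ ⟨a, b, hab, rfl, rfl⟩)

@[elab_as_elim]
lemma Heap.induction_on {motive : Heap I → Prop} (x : Heap I) (one : motive 1)
    (piece_mul : ∀ a y, motive y → motive (piece I a * y)) : motive x := by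
  obtain ⟨w, rfl⟩ := Con.mk'_surjective (c := HeapCon I) x
  induction w using FreeMonoid.inductionOn' with
  | one => exact one
  | of_mul a w ih => rw [map_mul]; exact piece_mul a _ ih

def addExtHom {A : Type} [AddCommMonoid A] (I : S → S → Prop) (φ : S → A) :
    Heap I →* Multiplicative A :=
  Con.lift (HeapCon I) (FreeMonoid.lift fun a => Multiplicative.ofAdd (φ a))
    (Con.conGen_le.mpr (by
      rintro w₁ w₂ ⟨a, b, hab, rfl, rfl⟩
      exact (Con.ker_rel _).mpr (by simp [map_mul, mul_comm])))

section AddExt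

variable {A : Type} [AddCommMonoid A] (φ : S → A)

lemma addExt_eq_toAdd (x : Heap I) : addExt φ x = (addExtHom I φ x).toAdd := rfl

lemma addExt_mul (x y : Heap I) : addExt φ (x * y) = addExt φ x + addExt φ y := by
  simp only [addExt_eq_toAdd, map_mul, toAdd_mul]

lemma addExt_one : addExt φ (1 : Heap I) = 0 := by
  simp only [addExt_eq_toAdd, map_one, toAdd_one]

lemma addExtHom_piece (a : S) : addExtHom I φ (piece I a) = Multiplicative.ofAdd (φ a) :=
  (Con.lift_mk' _ _).trans (FreeMonoid.lift_eval_of _ _)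

lemma addExt_piece (a : S) : addExt φ (piece I a) = φ a := by
  rw [addExt_eq_toAdd, addExtHom_piece, toAdd_ofAdd]

lemma addExt_heap (γ : Cl I) : addExt φ γ.heap = ∑ a ∈ γ.1, φ a := by
  have hmap : addExtHom I φ γ.heap = γ.1.noncommProd (fun a => addExtHom I φ (piece I a))
      (fun _ _ _ _ _ => Commute.all _ _) :=
    Finset.map_noncommProd _ _ _ _
  rw [addExt_eq_toAdd, hmap, Finset.noncommProd_eq_prod, toAdd_prod]
  exact Finset.sum_congr rfl fun a _ => by rw [addExtHom_piece, toAdd_ofAdd]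

end AddExt

lemma len_mul (x y : Heap I) : len (x * y) = len x + len y := addExt_mul _ x y

lemma len_one : len (1 : Heap I) = 0 := addExt_one _

lemma len_piece (a : S) : len (piece I a) = 1 := addExt_piece _ a

lemma len_heap (γ : Cl I) : len γ.heap = γ.1.card := by
  rw [len, addExt_heap, Finset.card_eq_sum_ones]

lemma occ_mul [DecidableEq S] (a : S) (x y : Heap I) : occ a (x * y) = occ a x + occ a y :=
  addExt_mul _ x y

lemma occ_heap [DecidableEq S] (a : S) (γ : Cl I) :
    occ a γ.heap = if a ∈ γ.1 then 1 else 0 := by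
  rw [occ, addExt_heap, Finset.sum_ite_eq']

lemma eq_one_of_len_eq_zero {x : Heap I} (h : len x = 0) : x = 1 := by
  induction x using Heap.induction_on with
  | one => rfl
  | piece_mul a y _ => rw [len_mul, len_piece] at h; omega

lemma len_le_len_of_dvd {x y : Heap I} (h : x ∣ y) : len x ≤ len y := by
  obtain ⟨z, rfl⟩ := h
  rw [len_mul]
  omega

lemma eq_of_dvd_of_len_le {x y : Heap I} (h : x ∣ y) (hl : len y ≤ len x) : x = y := by
  obtain ⟨z, rfl⟩ := h
  rw [len_mul] at hl
  rw [eq_one_of_len_eq_zero (by omega : len z = 0), mul_one]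

lemma Heap.dvd_antisymm {x y : Heap I} (h₁ : x ∣ y) (h₂ : y ∣ x) : x = y :=
  eq_of_dvd_of_len_le h₁ (len_le_len_of_dvd h₂)

lemma exists_eventually_eq_of_dvd_succ {f : ℕ → Heap I} (hf : ∀ m, f m ∣ f (m + 1))
    {B : Heap I} (hB : ∀ m, f m ∣ B) : ∃ w, ∀ᶠ m in atTop, f m = w := by
  have hbdd : BddAbove (Set.range (len ∘ f)) :=
    ⟨len B, by rintro _ ⟨m, rfl⟩; exact len_le_len_of_dvd (hB m)⟩
  obtain ⟨m₀, hm₀⟩ := Nat.sSup_mem (Set.range_nonempty _) hbdd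
  refine ⟨f m₀, eventually_atTop.2 ⟨m₀, fun m hm => ?_⟩⟩
  exact (eq_of_dvd_of_len_le (Nat.rel_of_forall_rel_succ_of_le (· ∣ ·) hf hm)
    ((le_csSup hbdd ⟨m, rfl⟩).trans hm₀.ge)).symm

instance [Countable S] : Countable (Heap I) :=
  have : Countable (FreeMonoid S) := inferInstanceAs (Countable (List S))
  Quotient.countable

end Heaps

section Cliques

@[simp]
lemma heap_emptyCl : (emptyCl I).heap = 1 := Finset.noncommProd_empty _ _

lemma move_emptyCl (γ : Cl I) : Move γ (emptyCl I) :=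
  fun _ hb => absurd hb (Finset.notMem_empty _)

lemma eq_emptyCl_of_move {γ : Cl I} (h : Move (emptyCl I) γ) : γ = emptyCl I :=
  Subtype.ext <| Finset.eq_empty_of_forall_notMem fun b hb => by
    obtain ⟨a, ha, -⟩ := h b hb
    exact Finset.notMem_empty a ha

lemma Move.mono_left {γ δ γ' : Cl I} (h : Move γ γ') (hsub : γ.1 ⊆ δ.1) : Move δ γ' :=
  fun b hb => let ⟨a, ha, hab⟩ := h b hb; ⟨a, hsub ha, hab⟩

lemma Cl.eq_of_mul_heap_eq {u : Heap I} {γ δ : Cl I} (h : u * γ.heap = u * δ.heap) : γ = δ := by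
  classical
  refine Subtype.ext (Finset.ext fun a => ?_)
  have := congrArg (occ a) h
  rw [occ_mul, occ_mul, occ_heap, occ_heap] at this
  split_ifs at this <;> simp_all

lemma commute_piece_heap {γ : Cl I} {a : S} (h : ∀ b ∈ γ.1, I a b) :
    Commute (piece I a) γ.heap :=
  Finset.noncommProd_commute _ _ _ _ fun b hb => piece_mul_piece_comm (h b hb)

include hsymm in
lemma Cl.exists_insert [DecidableEq S] {γ : Cl I} {a : S} (ha : a ∉ γ.1)
    (hind : ∀ b ∈ γ.1, I a b) :
    ∃ δ : Cl I, δ.1 = insert a γ.1 ∧ δ.heap = γ.heap * piece I a := by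
  have hpair : ∀ x ∈ insert a γ.1, ∀ y ∈ insert a γ.1, x ≠ y → I x y := by
    intro x hx y hy hxy
    rcases Finset.mem_insert.mp hx with hx | hx <;> rcases Finset.mem_insert.mp hy with hy | hy
    · exact absurd (hx.trans hy.symm) hxy
    · exact hx ▸ hind y hy
    · exact hy ▸ hsymm _ _ (hind x hx)
    · exact γ.2 x hx y hy hxy
  refine ⟨⟨insert a γ.1, hpair⟩, rfl, ?_⟩
  exact (Finset.noncommProd_insert_of_notMem _ _ _ _ ha).trans (commute_piece_heap hind).eq

end Cliques

section PartialProducts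

lemma ppSeq_zero (c : ℕ → Cl I) : ppSeq c 0 = 1 := rfl

lemma ppSeq_succ (c : ℕ → Cl I) (n : ℕ) : ppSeq c (n + 1) = ppSeq c n * (c n).heap := by
  simp [ppSeq, List.range_succ]

lemma ppSeq_dvd_ppSeq (c : ℕ → Cl I) {n m : ℕ} (h : n ≤ m) : ppSeq c n ∣ ppSeq c m :=
  Nat.rel_of_forall_rel_succ_of_le (· ∣ ·) (fun k => ppSeq_succ c k ▸ dvd_mul_right _ _) h

lemma ppSeq_congr {c c' : ℕ → Cl I} {n : ℕ} (h : ∀ k < n, c k = c' k) :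
    ppSeq c n = ppSeq c' n := by
  induction n with
  | zero => rfl
  | succ n ih => rw [ppSeq_succ, ppSeq_succ, ih fun k hk => h k (by omega), h n (by omega)]

lemma ppSeq_eq_of_eq_emptyCl {c : ℕ → Cl I} {n m : ℕ} (h : ∀ k, n ≤ k → c k = emptyCl I)
    (hm : n ≤ m) : ppSeq c m = ppSeq c n := by
  induction m, hm using Nat.le_induction with
  | base => rfl
  | succ m hm ih => rw [ppSeq_succ, h m hm, heap_emptyCl, mul_one, ih]

lemma le_len_ppSeq (ξ : Bnd I) (n : ℕ) : n ≤ len (ppSeq ξ.1 n) := by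
  induction n with
  | zero => exact Nat.zero_le _
  | succ n ih =>
    rw [ppSeq_succ, len_mul, len_heap]
    have := Finset.card_pos.mpr (ξ.2.1 n)
    omega

lemma len_ppSeq_le [Fintype S] (c : ℕ → Cl I) (n : ℕ) :
    len (ppSeq c n) ≤ n * Fintype.card S := by
  induction n with
  | zero => rw [ppSeq_zero, len_one]; omega
  | succ n ih =>
    rw [ppSeq_succ, len_mul, len_heap, Nat.succ_mul]
    have := Finset.card_le_univ (c n).1
    omega

def truncSeq (c : ℕ → Cl I) (n : ℕ) : ℕ → Cl I := fun k => if k < n then c k else emptyCl I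

lemma ppSeq_truncSeq (c : ℕ → Cl I) (n m : ℕ) :
    ppSeq (truncSeq c n) m = ppSeq c (min m n) := by
  induction m with
  | zero => simp [ppSeq_zero]
  | succ m ih =>
    rw [ppSeq_succ, ih, truncSeq]
    split_ifs with h
    · rw [Nat.min_eq_left h.le, Nat.min_eq_left (by omega), ppSeq_succ]
    · rw [heap_emptyCl, mul_one, Nat.min_eq_right (by omega), Nat.min_eq_right (by omega)]

lemma cfprop_truncSeq {c : ℕ → Cl I} (hc : ∀ k, Move (c k) (c (k + 1))) (n : ℕ) :
    CFprop I (truncSeq c n) (ppSeq c n) := by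
  refine ⟨fun k => ?_, n, fun m hm =>
    ⟨by rw [ppSeq_truncSeq, Nat.min_eq_right hm], if_neg (by omega)⟩⟩
  unfold truncSeq
  split_ifs
  · exact hc k
  · exact move_emptyCl _
  · omega
  · exact move_emptyCl _

lemma ppSeq_update_eq_ite (c : ℕ → Cl I) (h : ℕ) (δ : Cl I) (p : Heap I)
    (hδ : δ.heap = (c h).heap * p) (hcomm : ∀ k, h < k → Commute p (c k).heap) (m : ℕ) :
    ppSeq (Function.update c h δ) m = if m ≤ h then ppSeq c m else ppSeq c m * p := by
  induction m with
  | zero => simp [ppSeq_zero]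
  | succ m ih =>
    rw [ppSeq_succ, ppSeq_succ, ih]
    rcases lt_trichotomy m h with hm | rfl | hm
    · rw [Function.update_of_ne hm.ne, if_pos hm.le, if_pos (show m + 1 ≤ h by omega)]
    · rw [Function.update_self, if_pos le_rfl, if_neg (by omega), hδ, mul_assoc]
    · rw [Function.update_of_ne hm.ne', if_neg hm.not_ge, if_neg (by omega), mul_assoc,
        mul_assoc, (hcomm m hm).eq]

lemma move_update_insert [DecidableEq S] {c : ℕ → Cl I} (hc : ∀ k, Move (c k) (c (k + 1)))
    {h : ℕ} {δ : Cl I} {a : S} (hδ : δ.1 = insert a (c h).1)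
    (hdep : ∀ k, k + 1 = h → ∃ b ∈ (c k).1, ¬ I b a) (k : ℕ) :
    Move (Function.update c h δ k) (Function.update c h δ (k + 1)) := by
  by_cases hk : k + 1 = h
  · rw [Function.update_of_ne (by omega), hk, Function.update_self]
    intro b hb
    rw [hδ, Finset.mem_insert] at hb
    rcases hb with rfl | hb
    · exact hdep k hk
    · exact hc k b (hk ▸ hb)
  · rw [Function.update_of_ne hk]
    by_cases hk' : k = h
    · subst hk'
      rw [Function.update_self]
      exact (hc k).mono_left (hδ ▸ Finset.subset_insert _ _)
    · rw [Function.update_of_ne hk']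
      exact hc k

end PartialProducts

section CartierFoata

include hCF

lemma cfprop_cf (x : Heap I) : CFprop I (cf I x) x := by
  rw [cf, dif_pos (hCF x).exists]
  exact (hCF x).exists.choose_spec

lemma cf_eq_of_cfprop {c : ℕ → Cl I} {x : Heap I} (h : CFprop I c x) : cf I x = c :=
  (hCF x).unique (cfprop_cf hCF x) h

lemma cf_move (x : Heap I) (n : ℕ) : Move (cf I x n) (cf I x (n + 1)) := (cfprop_cf hCF x).1 n

lemma cf_eq_emptyCl (x : Heap I) {n : ℕ} (h : height x ≤ n) : cf I x n = emptyCl I := by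
  obtain ⟨N, hN⟩ := (cfprop_cf hCF x).2
  exact Nat.sInf_mem (s := {N | ∀ n, N ≤ n → cf I x n = emptyCl I})
    ⟨N, fun n hn => (hN n hn).2⟩ n h

lemma ppSeq_cf_of_height_le (x : Heap I) {n : ℕ} (h : height x ≤ n) :
    ppSeq (cf I x) n = x := by
  obtain ⟨N, hN⟩ := (cfprop_cf hCF x).2
  have hstab : ∀ m, height x ≤ m → ppSeq (cf I x) m = ppSeq (cf I x) (height x) :=
    fun m hm => ppSeq_eq_of_eq_emptyCl (fun k hk => cf_eq_emptyCl hCF x hk) hm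
  calc ppSeq (cf I x) n = ppSeq (cf I x) (max N (height x)) :=
        (hstab n h).trans (hstab _ (le_max_right _ _)).symm
    _ = x := (hN _ (le_max_left _ _)).1

lemma ppSeq_cf_dvd (x : Heap I) (n : ℕ) : ppSeq (cf I x) n ∣ x :=
  (ppSeq_dvd_ppSeq _ (le_max_left n (height x))).trans
    (dvd_of_eq (ppSeq_cf_of_height_le hCF x (le_max_right _ _)))

lemma len_le_of_height_le [Fintype S] {x : Heap I} {n : ℕ} (h : height x ≤ n) :
    len x ≤ n * Fintype.card S :=
  ppSeq_cf_of_height_le hCF x h ▸ len_ppSeq_le _ n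

lemma cf_ppSeq {c : ℕ → Cl I} (hc : ∀ k, Move (c k) (c (k + 1))) (n : ℕ) :
    cf I (ppSeq c n) = truncSeq c n :=
  cf_eq_of_cfprop hCF (cfprop_truncSeq hc n)

lemma ppSeq_cf_ppSeq {c : ℕ → Cl I} (hc : ∀ k, Move (c k) (c (k + 1))) (n m : ℕ) :
    ppSeq (cf I (ppSeq c n)) m = ppSeq c (min m n) := by
  rw [cf_ppSeq hCF hc, ppSeq_truncSeq]

lemma height_ppSeq_le {c : ℕ → Cl I} (hc : ∀ k, Move (c k) (c (k + 1))) (n : ℕ) :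
    height (ppSeq c n) ≤ n :=
  Nat.sInf_le fun m hm => by rw [cf_ppSeq hCF hc, truncSeq, if_neg (by omega)]

include hsymm hirr

/-- The piece `a` joins the clique of level `h`, the first level from which on every clique
of `x` is independent of `a`. -/
lemma exists_ppSeq_cf_mul_piece (x : Heap I) (a : S) :
    ∃ h, ∀ m, ppSeq (cf I (x * piece I a)) m =
      if m ≤ h then ppSeq (cf I x) m else ppSeq (cf I x) m * piece I a := by
  classical
  have hex : ∃ k, ∀ j, k ≤ j → ∀ b ∈ (cf I x j).1, I a b :=
    ⟨height x, fun j hj b hb => by simp [cf_eq_emptyCl hCF x hj, emptyCl] at hb⟩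
  set h := Nat.find hex
  have hind : ∀ j, h ≤ j → ∀ b ∈ (cf I x j).1, I a b := Nat.find_spec hex
  obtain ⟨δ, hδ₁, hδ₂⟩ :=
    Cl.exists_insert hsymm (fun ha => hirr a (hind h le_rfl a ha)) (hind h le_rfl)
  have hdep : ∀ k, k + 1 = h → ∃ b ∈ (cf I x k).1, ¬ I b a := by
    intro k hk
    have hmin := Nat.find_min hex (show k < h by omega)
    push Not at hmin
    obtain ⟨j, hj, b, hb, hab⟩ := hmin
    obtain rfl : j = k := by
      by_contra hne
      exact hab (hind j (by omega) b hb)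
    exact ⟨b, hb, fun hba => hab (hsymm _ _ hba)⟩
  have hpp := ppSeq_update_eq_ite (cf I x) h δ (piece I a) hδ₂
    fun k hk => commute_piece_heap (hind k hk.le)
  have hcf : cf I (x * piece I a) = Function.update (cf I x) h δ := by
    refine cf_eq_of_cfprop hCF ⟨move_update_insert (cf_move hCF x) hδ₁ hdep,
      max (height x) (h + 1), fun n hn => ⟨?_, ?_⟩⟩
    · rw [hpp, if_neg (by omega), ppSeq_cf_of_height_le hCF x (by omega)]
    · rw [Function.update_of_ne (by omega), cf_eq_emptyCl hCF x (by omega)]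
  exact ⟨h, fun m => by rw [hcf, hpp]⟩

lemma ppSeq_cf_dvd_of_dvd {x y : Heap I} (hxy : x ∣ y) (n : ℕ) :
    ppSeq (cf I x) n ∣ ppSeq (cf I y) n := by
  obtain ⟨z, rfl⟩ := hxy
  induction z using Heap.induction_on generalizing x with
  | one => rw [mul_one]
  | piece_mul a z ih =>
    obtain ⟨h, hh⟩ := exists_ppSeq_cf_mul_piece hsymm hirr hCF x a
    have hstep : ppSeq (cf I x) n ∣ ppSeq (cf I (x * piece I a)) n := by
      rw [hh]
      split_ifs
      exacts [dvd_rfl, dvd_mul_right _ _]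
    rw [← mul_assoc]
    exact hstep.trans ih

end CartierFoata

section Order

lemma pp_inl (x : Heap I) (n : ℕ) : pp (.inl x) n = ppSeq (cf I x) n := rfl

lemma pp_inr (ξ : Bnd I) (n : ℕ) : pp (.inr ξ) n = ppSeq ξ.1 n := rfl

-- `hLe` is definitionally the divisibility `∣` of the monoid `Heap I`.
lemma mLe_trans {ζ₁ ζ₂ ζ₃ : MB I} (h₁ : mLe ζ₁ ζ₂) (h₂ : mLe ζ₂ ζ₃) : mLe ζ₁ ζ₃ :=
  fun n => dvd_trans (h₁ n) (h₂ n)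

lemma Bnd.ext_ppSeq {ξ ξ' : Bnd I} (h : ∀ n, ppSeq ξ.1 n = ppSeq ξ'.1 n) : ξ = ξ' :=
  Subtype.ext <| funext fun n => Cl.eq_of_mul_heap_eq (u := ppSeq ξ.1 n) <| by
    rw [← ppSeq_succ, h (n + 1), ppSeq_succ, h n]

lemma mLe_antisymm {ξ ξ' : Bnd I} (h₁ : mLe (.inr ξ) (.inr ξ')) (h₂ : mLe (.inr ξ') (.inr ξ)) :
    ξ = ξ' :=
  Bnd.ext_ppSeq fun n => Heap.dvd_antisymm (h₁ n) (h₂ n)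

section

include hCF

lemma not_mLe_inr_inl (ξ : Bnd I) (v : Heap I) : ¬ mLe (.inr ξ) (.inl v) := fun h => by
  have h₁ := len_le_len_of_dvd (h (len v + 1))
  have h₂ := le_len_ppSeq ξ (len v + 1)
  have h₃ := len_le_len_of_dvd (ppSeq_cf_dvd hCF v (len v + 1))
  rw [pp_inl, pp_inr] at h₁
  omega

lemma mem_cyl_one (ξ : Bnd I) : ξ ∈ cyl (1 : Heap I) :=
  fun n => dvd_trans (ppSeq_cf_dvd hCF 1 n) (one_dvd _)

lemma cyl_one : cyl (1 : Heap I) = Set.univ :=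
  Set.eq_univ_of_forall (mem_cyl_one hCF)

lemma dvd_pp_of_mLe {x : Heap I} {ζ : MB I} (h : mLe (.inl x) ζ) {n : ℕ}
    (hn : height x ≤ n) : x ∣ pp ζ n := by
  have := h n
  rwa [pp_inl, ppSeq_cf_of_height_le hCF x hn] at this

lemma dvd_ppSeq_of_mem_cyl {x : Heap I} {ξ : Bnd I} (h : ξ ∈ cyl x) {n : ℕ}
    (hn : height x ≤ n) : x ∣ ppSeq ξ.1 n :=
  dvd_pp_of_mLe hCF h hn

lemma mem_cyl_ppSeq (ξ : Bnd I) (n : ℕ) : ξ ∈ cyl (ppSeq ξ.1 n) := fun m => by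
  rw [pp_inl, ppSeq_cf_ppSeq hCF ξ.2.2]
  exact ppSeq_dvd_ppSeq _ (min_le_left _ _)

end

section

include hsymm hirr hCF

lemma mLe_inl_of_dvd {x y : Heap I} (h : x ∣ y) : mLe (.inl x) (.inl y) :=
  ppSeq_cf_dvd_of_dvd hsymm hirr hCF h

lemma mLe_of_dvd_of_mLe {x y : Heap I} {ζ : MB I} (h : x ∣ y) (h' : mLe (.inl y) ζ) :
    mLe (.inl x) ζ :=
  mLe_trans (mLe_inl_of_dvd hsymm hirr hCF h) h'

lemma mem_cyl_of_dvd_ppSeq {x : Heap I} {ξ : Bnd I} {n : ℕ} (h : x ∣ ppSeq ξ.1 n) :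
    ξ ∈ cyl x :=
  mLe_of_dvd_of_mLe hsymm hirr hCF h (mem_cyl_ppSeq hCF ξ n)

lemma cyl_anti {x y : Heap I} (h : x ∣ y) : cyl y ⊆ cyl x :=
  fun _ => mLe_of_dvd_of_mLe hsymm hirr hCF h

lemma exists_eventually_ppSeq_cf_eq {u : ℕ → Heap I} (hu : ∀ m, u m ∣ u (m + 1))
    (hbdd : ∀ k, ∃ B, ∀ m, ppSeq (cf I (u m)) k ∣ B) :
    ∃ δ : ℕ → Cl I, (∀ k, Move (δ k) (δ (k + 1))) ∧
      ∀ k, ∀ᶠ m in atTop, ppSeq (cf I (u m)) k = ppSeq δ k := by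
  have hlim : ∀ k, ∃ w, ∀ᶠ m in atTop, ppSeq (cf I (u m)) k = w := fun k =>
    let ⟨_, hB⟩ := hbdd k
    exists_eventually_eq_of_dvd_succ (fun m => ppSeq_cf_dvd_of_dvd hsymm hirr hCF (hu m) k) hB
  have hcl : ∀ k, ∃ γ, ∀ᶠ m in atTop, cf I (u m) k = γ := by
    intro k
    obtain ⟨w, hw⟩ := hlim k
    obtain ⟨w', hw'⟩ := hlim (k + 1)
    obtain ⟨m₀, hm₀, hm₀'⟩ := (hw.and hw').exists
    refine ⟨cf I (u m₀) k, (hw.and hw').mono fun m ⟨hm, hm'⟩ =>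
      Cl.eq_of_mul_heap_eq (u := w) ?_⟩
    calc w * (cf I (u m) k).heap = w' := by rw [← hm, ← ppSeq_succ, hm']
      _ = w * (cf I (u m₀) k).heap := by rw [← hm₀', ppSeq_succ, hm₀]
  choose δ hδ using hcl
  refine ⟨δ, fun k => ?_, fun k => ?_⟩
  · obtain ⟨m, hm, hm'⟩ := ((hδ k).and (hδ (k + 1))).exists
    exact hm ▸ hm' ▸ cf_move hCF (u m) k
  · exact ((eventually_all_finset (Finset.range k)).2 fun j _ => hδ j).mono fun m hm =>
      ppSeq_congr fun j hj => hm j (Finset.mem_range.2 hj)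

/-- Finite heaps are compact in `M̄`. The limit of the Cartier–Foata prefixes of the chain
cannot be a finite heap, since it would then bound `ξ`. -/
lemma exists_ppSeq_dvd_of_isLUB {u : ℕ → Heap I} {ξ : Bnd I} (hu : ∀ m, u m ∣ u (m + 1))
    (hub : ∀ m, mLe (.inl (u m)) (.inr ξ))
    (hlub : ∀ ζ : MB I, (∀ m, mLe (.inl (u m)) ζ) → mLe (.inr ξ) ζ) (k : ℕ) :
    ∃ m, ppSeq ξ.1 k ∣ u m := by
  obtain ⟨δ, hδ, hlim⟩ :=
    exists_eventually_ppSeq_cf_eq hsymm hirr hCF hu fun k => ⟨ppSeq ξ.1 k, fun m => hub m k⟩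
  have hbound : ∀ m k, ppSeq (cf I (u m)) k ∣ ppSeq δ k := fun m k => by
    obtain ⟨m', hm', hmm'⟩ := ((hlim k).and (eventually_ge_atTop m)).exists
    exact hm' ▸ Nat.rel_of_forall_rel_succ_of_le (· ∣ ·)
      (fun m => ppSeq_cf_dvd_of_dvd hsymm hirr hCF (hu m) k) hmm'
  by_cases hne : ∀ k, (δ k).1.Nonempty
  · have hξδ := hlub (.inr ⟨δ, hne, hδ⟩) fun m => hbound m
    obtain ⟨m, hm⟩ := (hlim k).exists
    have hδm : ppSeq δ k ∣ u m := hm ▸ ppSeq_cf_dvd hCF (u m) k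
    exact ⟨m, dvd_trans (hξδ k) hδm⟩
  · exfalso
    push Not at hne
    obtain ⟨k₀, hk₀⟩ := hne
    have hempty : ∀ k, k₀ ≤ k → δ k = emptyCl I := fun k hk => by
      induction k, hk using Nat.le_induction with
      | base => exact Subtype.ext hk₀
      | succ k _ ih => exact eq_emptyCl_of_move (ih ▸ hδ k)
    have hdvd : ∀ m, u m ∣ ppSeq δ k₀ := fun m => by
      have := hbound m (max (height (u m)) k₀)
      rwa [ppSeq_cf_of_height_le hCF _ (le_max_left _ _),
        ppSeq_eq_of_eq_emptyCl hempty (le_max_right _ _)] at this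
    exact not_mLe_inr_inl hCF ξ _ (hlub _ fun m => mLe_inl_of_dvd hsymm hirr hCF (hdvd m))

end

end Order

section Concatenation

section

include hconc

lemma isConc_concB (x : Heap I) (ζ : Bnd I) : IsConc x ζ (.inr (concB x ζ)) := by
  rw [concB, dif_pos (hconc x ζ)]
  exact (hconc x ζ).choose_spec

lemma mLe_concB (x : Heap I) (ζ : Bnd I) (n : ℕ) :
    mLe (.inl (x * ppSeq ζ.1 n)) (.inr (concB x ζ)) :=
  (isConc_concB hconc x ζ).1 n

lemma concB_mLe {x : Heap I} {ζ : Bnd I} {η : MB I}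
    (h : ∀ n, mLe (.inl (x * ppSeq ζ.1 n)) η) : mLe (.inr (concB x ζ)) η :=
  (isConc_concB hconc x ζ).2 η h

lemma concB_mem_cyl (x : Heap I) (ζ : Bnd I) : concB x ζ ∈ cyl x := by
  have := mLe_concB hconc x ζ 0
  rwa [ppSeq_zero, mul_one] at this

lemma concB_eq_of_isConc {x : Heap I} {ζ η : Bnd I} (h : IsConc x ζ (.inr η)) :
    concB x ζ = η :=
  mLe_antisymm (concB_mLe hconc h.1) (h.2 _ (isConc_concB hconc x ζ).1)

lemma subB_of_not_mem_cyl {x : Heap I} {ξ : Bnd I} (h : ξ ∉ cyl x) : subB ξ x = ξ := by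
  rw [subB, dif_neg]
  rintro ⟨ζ, rfl⟩
  exact h (concB_mem_cyl hconc x ζ)

include hCF in
lemma concB_one (ζ : Bnd I) : concB 1 ζ = ζ := by
  refine concB_eq_of_isConc hconc ⟨fun n => ?_, fun η hη n => ?_⟩
  · rw [pp_inr, one_mul]
    exact mem_cyl_ppSeq hCF ζ n
  · have := hη n n
    rwa [pp_inr, one_mul, pp_inl, ppSeq_cf_ppSeq hCF ζ.2.2, min_self] at this

end

include hsubEx in
lemma concB_subB {x : Heap I} {ξ : Bnd I} (h : ξ ∈ cyl x) : concB x (subB ξ x) = ξ := by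
  rw [subB, dif_pos (hsubEx x ξ h)]
  exact (hsubEx x ξ h).choose_spec

include hconc hconcInj hsubEx in
lemma subB_concB (x : Heap I) (ζ : Bnd I) : subB (concB x ζ) x = ζ :=
  hconcInj _ _ _ (concB_subB hsubEx (concB_mem_cyl hconc x ζ))

include hCF hconc hsubEx in
lemma subB_one (ξ : Bnd I) : subB ξ 1 = ξ := by
  simpa only [concB_one hCF hconc] using concB_subB hsubEx (mem_cyl_one hCF ξ)

section

include hsymm hirr hCF hconc

lemma exists_ppSeq_concB_dvd (x : Heap I) (ζ : Bnd I) (k : ℕ) :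
    ∃ m, ppSeq (concB x ζ).1 k ∣ x * ppSeq ζ.1 m :=
  exists_ppSeq_dvd_of_isLUB hsymm hirr hCF
    (fun m => mul_dvd_mul_left x (ppSeq_dvd_ppSeq _ m.le_succ)) (mLe_concB hconc x ζ)
    (fun _ => concB_mLe hconc) k

lemma mLe_concB_of_mLe {w : Heap I} {ζ : Bnd I} (x : Heap I) (h : mLe (.inl w) (.inr ζ)) :
    mLe (.inl (x * w)) (.inr (concB x ζ)) :=
  mLe_of_dvd_of_mLe hsymm hirr hCF (mul_dvd_mul_left x (dvd_pp_of_mLe hCF h le_rfl))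
    (mLe_concB hconc x ζ _)

lemma concB_mul (x y : Heap I) (ζ : Bnd I) : concB (x * y) ζ = concB x (concB y ζ) := by
  refine concB_eq_of_isConc hconc ⟨fun n => ?_, fun η hη => concB_mLe hconc fun n => ?_⟩
  · rw [pp_inr, mul_assoc]
    exact mLe_concB_of_mLe hsymm hirr hCF hconc x (mLe_concB hconc y ζ n)
  · obtain ⟨m, hm⟩ := exists_ppSeq_concB_dvd hsymm hirr hCF hconc y ζ n
    exact mLe_of_dvd_of_mLe hsymm hirr hCF (mul_assoc x y _ ▸ mul_dvd_mul_left x hm) (hη m)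

include hconcInj hsubEx

lemma mem_cyl_mul_iff {x u : Heap I} {ξ : Bnd I} :
    ξ ∈ cyl (x * u) ↔ ξ ∈ cyl x ∧ subB ξ x ∈ cyl u := by
  constructor
  · intro h
    obtain ⟨ρ, rfl⟩ := hsubEx _ ξ h
    rw [concB_mul hsymm hirr hCF hconc, subB_concB hconc hconcInj hsubEx]
    exact ⟨concB_mem_cyl hconc _ _, concB_mem_cyl hconc _ _⟩
  · rintro ⟨hx, hu⟩
    obtain ⟨ρ, hρ⟩ := hsubEx u _ hu
    rw [← concB_subB hsubEx hx, ← hρ, ← concB_mul hsymm hirr hCF hconc]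
    exact concB_mem_cyl hconc _ _

lemma subB_subB {x y : Heap I} {ξ : Bnd I} (h : ξ ∈ cyl (x * y)) :
    subB (subB ξ x) y = subB ξ (x * y) := by
  obtain ⟨ρ, rfl⟩ := hsubEx _ ξ h
  rw [subB_concB hconc hconcInj hsubEx, concB_mul hsymm hirr hCF hconc,
    subB_concB hconc hconcInj hsubEx, subB_concB hconc hconcInj hsubEx]

end

end Concatenation

section StoppingTime

include hV in
lemma IsAST.mem_cyl {ξ : Bnd I} {x : Heap I} (h : V ξ = .inl x) :
    ξ ∈ cyl x := by
  have := hV.1 ξ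
  rwa [h] at this

include hV in
lemma IsAST.eq_of_mem_cyl {ξ ξ' : Bnd I} {x : Heap I} (h : V ξ = .inl x)
    (h' : ξ' ∈ cyl x) : V ξ' = .inl x :=
  (hV.2 ξ ξ' x h h').trans h

lemma shiftV_of_eq_inl {ξ : Bnd I} {x : Heap I} (h : V ξ = .inl x) :
    shiftV V ξ = subB ξ x := by
  rw [shiftV, h]

lemma shiftV_of_eq_inr {ξ ρ : Bnd I} (h : V ξ = .inr ρ) : shiftV V ξ = ξ := by
  rw [shiftV, h]

lemma iter_succ_of_eq_inl {n : ℕ} {ξ : Bnd I} {x y : Heap I} (hx : iter V n ξ = .inl x)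
    (hy : V (subB ξ x) = .inl y) : iter V (n + 1) ξ = .inl (x * y) := by
  simp only [iter, hx, hy]
  rfl

lemma exists_of_iter_succ_eq_inl {n : ℕ} {ξ : Bnd I} {u : Heap I}
    (h : iter V (n + 1) ξ = .inl u) :
    ∃ x y, iter V n ξ = .inl x ∧ V (subB ξ x) = .inl y ∧ u = x * y := by
  rcases hx : iter V n ξ with x | ρ
  · rcases hy : V (subB ξ x) with y | ρ'
    · rw [iter_succ_of_eq_inl hx hy] at h
      exact ⟨x, y, rfl, hy, (Sum.inl.inj h).symm⟩
    · simp [iter, hx, hy] at h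
  · simp [iter, hx] at h

lemma exists_iter_eq_inl_dvd_of_le {n m : ℕ} (hnm : n ≤ m) {ξ : Bnd I} {u : Heap I}
    (hu : iter V m ξ = .inl u) : ∃ x, iter V n ξ = .inl x ∧ x ∣ u := by
  induction m, hnm using Nat.le_induction generalizing u with
  | base => exact ⟨u, hu, dvd_rfl⟩
  | succ m _ ih =>
    obtain ⟨x, y, hx, -, rfl⟩ := exists_of_iter_succ_eq_inl hu
    obtain ⟨x', hx', hdvd⟩ := ih hx
    exact ⟨x', hx', hdvd.trans (dvd_mul_right x y)⟩

include hsymm hirr hCF hconc hconcInj hsubEx hV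

lemma mem_cyl_of_iter_eq_inl {n : ℕ} {ξ : Bnd I} {u : Heap I} (hu : iter V n ξ = .inl u) :
    ξ ∈ cyl u := by
  induction n generalizing u with
  | zero => exact (Sum.inl.inj hu) ▸ mem_cyl_one hCF ξ
  | succ n ih =>
    obtain ⟨x, y, hx, hy, rfl⟩ := exists_of_iter_succ_eq_inl hu
    exact (mem_cyl_mul_iff hsymm hirr hCF hconc hconcInj hsubEx).2 ⟨ih hx, hV.mem_cyl hy⟩

lemma iter_eq_inl_of_mem_cyl {n : ℕ} {ξ ξ' : Bnd I} {u : Heap I} (hu : iter V n ξ = .inl u)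
    (h' : ξ' ∈ cyl u) : iter V n ξ' = .inl u := by
  induction n generalizing u with
  | zero => exact hu
  | succ n ih =>
    obtain ⟨x, y, hx, hy, rfl⟩ := exists_of_iter_succ_eq_inl hu
    obtain ⟨h'x, h'y⟩ := (mem_cyl_mul_iff hsymm hirr hCF hconc hconcInj hsubEx).1 h'
    exact iter_succ_of_eq_inl (ih hx h'x) (hV.eq_of_mem_cyl hy h'y)

lemma iterate_shiftV_of_iter_eq_inl {n : ℕ} {ξ : Bnd I} {u : Heap I}
    (hu : iter V n ξ = .inl u) : (shiftV V)^[n] ξ = subB ξ u := by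
  induction n generalizing u with
  | zero => rw [← Sum.inl.inj hu, Function.iterate_zero_apply, subB_one hCF hconc hsubEx]
  | succ n ih =>
    obtain ⟨x, y, hx, hy, rfl⟩ := exists_of_iter_succ_eq_inl hu
    rw [Function.iterate_succ_apply', ih hx, shiftV_of_eq_inl hy,
      subB_subB hsymm hirr hCF hconc hconcInj hsubEx
        (mem_cyl_of_iter_eq_inl hsymm hirr hCF hconc hconcInj hsubEx hV hu)]

end StoppingTime

section PrefixSets

lemma measurableSet_cyl (x : Heap I) : MeasurableSet (cyl x) :=
  MeasurableSpace.measurableSet_generateFrom ⟨x, rfl⟩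

def prefixSet (n : ℕ) (w : Heap I) : Set (Bnd I) := {ξ | ppSeq ξ.1 n = w}

lemma pairwise_disjoint_prefixSet (n : ℕ) :
    Pairwise fun w w' : Heap I => Disjoint (prefixSet (I := I) n w) (prefixSet n w') :=
  fun _ _ hne => Set.disjoint_left.2 fun _ h₁ h₂ => hne (h₁.symm.trans h₂)

section

include hCF

lemma prefixSet_eq_empty {n : ℕ} {w : Heap I} (h : ¬ height w ≤ n) : prefixSet n w = ∅ :=
  Set.eq_empty_of_forall_notMem fun ξ hξ => h (hξ ▸ height_ppSeq_le hCF ξ.2.2 n)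

lemma prefixSet_eq_diff {n : ℕ} {w : Heap I} (hw : height w ≤ n) :
    prefixSet n w = cyl w \ ⋃ v ∈ {v : Heap I | height v ≤ n ∧ ¬ v ∣ w}, cyl v := by
  ext ξ
  constructor
  · rintro (rfl : ppSeq ξ.1 n = w)
    refine ⟨mem_cyl_ppSeq hCF ξ n, fun hmem => ?_⟩
    obtain ⟨v, ⟨hv, hvw⟩, hξ⟩ := Set.mem_iUnion₂.1 hmem
    exact hvw (dvd_ppSeq_of_mem_cyl hCF hξ hv)
  · rintro ⟨hξ, hnot⟩
    refine Heap.dvd_antisymm (by_contra fun h => hnot (Set.mem_iUnion₂.2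
      ⟨_, ⟨height_ppSeq_le hCF ξ.2.2 n, h⟩, mem_cyl_ppSeq hCF ξ n⟩))
      (dvd_ppSeq_of_mem_cyl hCF hξ hw)

lemma measurableSet_prefixSet [Countable S] (n : ℕ) (w : Heap I) :
    MeasurableSet (prefixSet n w) := by
  by_cases hw : height w ≤ n
  · rw [prefixSet_eq_diff hCF hw]
    exact (measurableSet_cyl w).diff
      (MeasurableSet.biUnion (Set.to_countable _) fun v _ => measurableSet_cyl v)
  · rw [prefixSet_eq_empty hCF hw]
    exact MeasurableSet.empty

/-- The `n`-prefix of `ξ` is determined by its `m`-prefix when `n ≤ m`. -/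
lemma isPiSystem_prefixSet : IsPiSystem {A : Set (Bnd I) | ∃ n w, prefixSet n w = A} := by
  have key : ∀ {n m : ℕ} {w w' : Heap I} {ξ : Bnd I}, n ≤ m → ξ ∈ prefixSet n w →
      ξ ∈ prefixSet m w' → prefixSet m w' ⊆ prefixSet n w := by
    intro n m w w' ξ hnm hξ hξ' ξ' hξ''
    have hpre : ∀ ζ : Bnd I, ppSeq ζ.1 n = ppSeq (cf I (ppSeq ζ.1 m)) n := fun ζ => by
      rw [ppSeq_cf_ppSeq hCF ζ.2.2, Nat.min_eq_left hnm]
    change ppSeq ξ'.1 n = w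
    rw [← hξ, hpre, hpre ξ, hξ', hξ'']
  rintro _ ⟨n, w, rfl⟩ _ ⟨m, w', rfl⟩ ⟨ξ, hξ, hξ'⟩
  rcases le_total n m with hnm | hmn
  · exact ⟨m, w', (Set.inter_eq_right.2 (key hnm hξ hξ')).symm⟩
  · exact ⟨n, w, (Set.inter_eq_left.2 (key hmn hξ' hξ)).symm⟩

end

include hsymm hirr hCF

lemma cyl_eq_biUnion_prefixSet {x : Heap I} {n : ℕ} (hx : height x ≤ n) :
    cyl x = ⋃ w ∈ {w | x ∣ w}, prefixSet n w := by
  ext ξ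
  simp only [Set.mem_iUnion₂, Set.mem_ofPred_eq, prefixSet, exists_prop, exists_eq_right']
  exact ⟨fun h => dvd_ppSeq_of_mem_cyl hCF h hx, mem_cyl_of_dvd_ppSeq hsymm hirr hCF⟩

lemma generateFrom_prefixSet [Countable S] :
    Fsa I = MeasurableSpace.generateFrom {A : Set (Bnd I) | ∃ n w, prefixSet n w = A} := by
  refine le_antisymm (MeasurableSpace.generateFrom_le ?_) (MeasurableSpace.generateFrom_le ?_)
  · rintro _ ⟨x, rfl⟩
    rw [cyl_eq_biUnion_prefixSet hsymm hirr hCF le_rfl]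
    exact MeasurableSet.biUnion (Set.to_countable _) fun w _ =>
      MeasurableSpace.measurableSet_generateFrom ⟨_, w, rfl⟩
  · rintro _ ⟨n, w, rfl⟩
    exact measurableSet_prefixSet hCF n w

lemma cyl_eq_prefixSet_union {w : Heap I} {n : ℕ} (hw : height w ≤ n) :
    cyl w = prefixSet n w ∪ ⋃ w' ∈ {w' | w ∣ w' ∧ w' ≠ w}, prefixSet n w' := by
  rw [cyl_eq_biUnion_prefixSet hsymm hirr hCF hw]
  ext ξ
  simp only [Set.mem_iUnion₂, Set.mem_union, Set.mem_ofPred_eq, exists_prop]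
  constructor
  · rintro ⟨w', hw', hξ⟩
    by_cases hne : w' = w
    · exact Or.inl (hne ▸ hξ)
    · exact Or.inr ⟨w', ⟨hw', hne⟩, hξ⟩
  · rintro (hξ | ⟨w', ⟨hw', -⟩, hξ⟩)
    exacts [⟨w, dvd_rfl, hξ⟩, ⟨w', hw', hξ⟩]

lemma measure_prefixSet_eq [Fintype S] {μ ν : Measure (Bnd I)} [IsFiniteMeasure μ]
    (h : ∀ x, μ (cyl x) = ν (cyl x)) (n : ℕ) (w : Heap I) :
    μ (prefixSet n w) = ν (prefixSet n w) := by
  -- downward induction on `len w`, which is at most `n * card S` unless `prefixSet n w = ∅`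
  induction hk : n * Fintype.card S - len w using Nat.strong_induction_on generalizing w with
  | _ k ih =>
  by_cases hw : height w ≤ n
  swap
  · rw [prefixSet_eq_empty hCF hw, measure_empty, measure_empty]
  set R := ⋃ w' ∈ {w' | w ∣ w' ∧ w' ≠ w}, prefixSet n w'
  have hR : MeasurableSet R :=
    MeasurableSet.biUnion (Set.to_countable _) fun w' _ => measurableSet_prefixSet hCF n w'
  have hdisj : Disjoint (prefixSet n w) R := Set.disjoint_iUnion₂_right.2 fun w' hw' =>
    pairwise_disjoint_prefixSet n (Ne.symm hw'.2)
  have hμνR : μ R = ν R := by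
    have hpd : Set.PairwiseDisjoint {w' | w ∣ w' ∧ w' ≠ w} (prefixSet (I := I) n) :=
      fun _ _ _ _ hne => pairwise_disjoint_prefixSet n hne
    rw [measure_biUnion (Set.to_countable _) hpd fun w' _ => measurableSet_prefixSet hCF n w',
      measure_biUnion (Set.to_countable _) hpd fun w' _ => measurableSet_prefixSet hCF n w']
    refine tsum_congr fun ⟨w', hww', hne⟩ => ?_
    by_cases hw' : height w' ≤ n
    · have hlt : len w < len w' := lt_of_le_of_ne (len_le_len_of_dvd hww')
        fun hl => hne (eq_of_dvd_of_len_le hww' hl.ge).symm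
      exact ih _ (by have := len_le_of_height_le hCF hw'; omega) w' rfl
    · simp only [prefixSet_eq_empty hCF hw', measure_empty]
  have hμν := h w
  rw [cyl_eq_prefixSet_union hsymm hirr hCF hw, measure_union hdisj hR,
    measure_union hdisj hR, hμνR] at hμν
  exact (ENNReal.add_left_inj (hμνR ▸ measure_ne_top μ R)).1 hμν

theorem ext_of_cyl [Fintype S] {μ ν : Measure (Bnd I)} [IsFiniteMeasure μ]
    (h : ∀ x, μ (cyl x) = ν (cyl x)) : μ = ν :=
  ext_of_generate_finite _ (generateFrom_prefixSet hsymm hirr hCF) (isPiSystem_prefixSet hCF)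
    (by rintro _ ⟨n, w, rfl⟩; exact measure_prefixSet_eq hsymm hirr hCF h n w)
    (by rw [← cyl_one hCF, h])

end PrefixSets

section Bernoulli

include hsymm hirr hCF hconc hconcInj hsubEx

lemma preimage_subB_cyl (y u : Heap I) :
    (subB · y) ⁻¹' cyl u = cyl (y * u) ∪ (cyl u \ cyl y) := by
  ext ξ
  by_cases hξ : ξ ∈ cyl y
  · simp [mem_cyl_mul_iff hsymm hirr hCF hconc hconcInj hsubEx, hξ]
  · simp [mem_cyl_mul_iff hsymm hirr hCF hconc hconcInj hsubEx, hξ,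
      subB_of_not_mem_cyl hconc hξ]

lemma measurable_subB (y : Heap I) : Measurable (subB · y) := by
  refine measurable_generateFrom ?_
  rintro _ ⟨u, rfl⟩
  rw [preimage_subB_cyl hsymm hirr hCF hconc hconcInj hsubEx]
  exact (measurableSet_cyl _).union ((measurableSet_cyl _).diff (measurableSet_cyl _))

theorem map_restrict_cyl_subB [Fintype S] (hP : IsBernoulli P) (y : Heap I) :
    (P.restrict (cyl y)).map (subB · y) = P (cyl y) • P := by
  have := hP.1
  have hmeas := measurable_subB hsymm hirr hCF hconc hconcInj hsubEx y
  refine ext_of_cyl hsymm hirr hCF fun u => ?_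
  rw [Measure.map_apply hmeas (measurableSet_cyl u),
    Measure.restrict_apply (hmeas (measurableSet_cyl u)), Measure.smul_apply, smul_eq_mul,
    ← hP.2.1]
  congr 1
  ext ξ
  exact and_comm.trans (mem_cyl_mul_iff hsymm hirr hCF hconc hconcInj hsubEx).symm

lemma measure_cyl_inter_preimage_subB [Fintype S] (hP : IsBernoulli P) (y : Heap I)
    {A : Set (Bnd I)} (hA : MeasurableSet A) :
    P (cyl y ∩ (subB · y) ⁻¹' A) = P (cyl y) * P A := by
  have := congrArg (· A) (map_restrict_cyl_subB hsymm hirr hCF hconc hconcInj hsubEx hP y)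
  have hmeas := measurable_subB hsymm hirr hCF hconc hconcInj hsubEx y
  simpa [Measure.map_apply hmeas hA, Measure.restrict_apply (hmeas hA), Set.inter_comm]
    using this

end Bernoulli

section Shift

def stopSet (V : Bnd I → MB I) (x : Heap I) : Set (Bnd I) := {ξ | V ξ = .inl x}

lemma mem_stopSet {ξ : Bnd I} {x : Heap I} : ξ ∈ stopSet V x ↔ V ξ = .inl x := Iff.rfl

include hV in
lemma IsAST.stopSet_eq (x : Heap I) : stopSet V x = ∅ ∨ stopSet V x = cyl x := by
  by_cases h : ∃ ξ, V ξ = .inl x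
  · obtain ⟨ξ, hξ⟩ := h
    exact Or.inr (Set.ext fun ξ' => mem_stopSet.trans ⟨hV.mem_cyl, hV.eq_of_mem_cyl hξ⟩)
  · exact Or.inl (Set.eq_empty_of_forall_notMem fun ξ hξ => h ⟨ξ, mem_stopSet.1 hξ⟩)

include hV in
lemma IsAST.measurableSet_stopSet (x : Heap I) : MeasurableSet (stopSet V x) := by
  rcases hV.stopSet_eq x with h | h <;> rw [h]
  exacts [.empty, measurableSet_cyl x]

lemma pairwise_disjoint_stopSet :
    Pairwise fun x y : Heap I => Disjoint (stopSet V x) (stopSet V y) :=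
  fun _ _ hne => Set.disjoint_left.2 fun _ h h' =>
    hne (Sum.inl.inj ((mem_stopSet.1 h).symm.trans (mem_stopSet.1 h')))

lemma preimage_shiftV (A : Set (Bnd I)) :
    shiftV V ⁻¹' A = (A \ ⋃ x, stopSet V x) ∪ ⋃ x, stopSet V x ∩ (subB · x) ⁻¹' A := by
  ext ξ
  simp only [Set.mem_preimage, Set.mem_union, Set.mem_sdiff, Set.mem_iUnion, Set.mem_inter_iff,
    mem_stopSet]
  rcases hξ : V ξ with x | ρ
  · rw [shiftV_of_eq_inl hξ]
    refine ⟨fun h => Or.inr ⟨x, rfl, h⟩, ?_⟩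
    rintro (⟨-, h⟩ | ⟨y, hy, h⟩)
    · exact absurd ⟨x, rfl⟩ h
    · exact Sum.inl.inj hy ▸ h
  · rw [shiftV_of_eq_inr hξ]
    refine ⟨fun h => Or.inl ⟨h, fun ⟨y, hy⟩ => Sum.inr_ne_inl hy⟩, ?_⟩
    rintro (⟨h, -⟩ | ⟨y, hy, -⟩)
    exacts [h, absurd hy Sum.inr_ne_inl]

include hsymm hirr hCF hconc hconcInj hsubEx hV

lemma measurable_shiftV [Countable S] : Measurable (shiftV V) := fun A hA => by
  rw [preimage_shiftV]
  exact (hA.diff (.iUnion hV.measurableSet_stopSet)).union (.iUnion fun x =>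
    (hV.measurableSet_stopSet x).inter
      (measurable_subB hsymm hirr hCF hconc hconcInj hsubEx x hA))

lemma measure_preimage_shiftV [Fintype S] (hP : IsBernoulli P)
    (hfin : ∀ᵐ ξ ∂P, ∃ x, V ξ = .inl x) {A : Set (Bnd I)} (hA : MeasurableSet A) :
    P (shiftV V ⁻¹' A) = P A := by
  have := hP.1
  have hcompl : P (⋃ x, stopSet V x)ᶜ = 0 :=
    measure_mono_null (fun ξ hξ hex => hξ (Set.mem_iUnion.2 hex)) (ae_iff.1 hfin)
  have hdom : P (⋃ x, stopSet V x) = 1 := by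
    rw [measure_congr (ae_eq_univ.2 hcompl), measure_univ]
  have hnull : (A \ ⋃ x, stopSet V x) =ᵐ[P] (∅ : Set (Bnd I)) :=
    ae_eq_empty.2 (measure_mono_null (Set.sdiff_subset_compl _ _) hcompl)
  have hpiece : ∀ x, P (stopSet V x ∩ (subB · x) ⁻¹' A) = P (stopSet V x) * P A := by
    intro x
    rcases hV.stopSet_eq x with h | h <;> rw [h]
    · simp
    · exact measure_cyl_inter_preimage_subB hsymm hirr hCF hconc hconcInj hsubEx hP x hA
  rw [preimage_shiftV]
  refine (measure_congr (union_ae_eq_right_of_ae_eq_empty hnull)).trans ?_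
  rw [measure_iUnion (fun x y hne => (pairwise_disjoint_stopSet hne).mono
      Set.inter_subset_left Set.inter_subset_left)
      fun x => (hV.measurableSet_stopSet x).inter
        (measurable_subB hsymm hirr hCF hconc hconcInj hsubEx x hA),
    tsum_congr hpiece, ENNReal.tsum_mul_right,
    ← measure_iUnion pairwise_disjoint_stopSet hV.measurableSet_stopSet, hdom, one_mul]

lemma measurePreserving_shiftV [Fintype S] (hP : IsBernoulli P)
    (hfin : ∀ᵐ ξ ∂P, ∃ x, V ξ = .inl x) : MeasurePreserving (shiftV V) P P :=
  have hmeas := measurable_shiftV hsymm hirr hCF hconc hconcInj hsubEx hV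
  ⟨hmeas, Measure.ext fun A hA => by
    rw [Measure.map_apply hmeas hA]
    exact measure_preimage_shiftV hsymm hirr hCF hconc hconcInj hsubEx hV hP hfin hA⟩

end Shift

section Ergodicity

open ProbabilityTheory

def iterCyls (V : Bnd I → MB I) : Set (Set (Bnd I)) :=
  {A | ∃ n u, (∃ ξ, iter V n ξ = .inl u) ∧ cyl u = A}

lemma measurableSet_of_mem_iterCyls {A : Set (Bnd I)} (hA : A ∈ iterCyls V) : MeasurableSet A := by
  obtain ⟨n, u, -, rfl⟩ := hA
  exact measurableSet_cyl u

include hsymm hirr hCF hconc hconcInj hsubEx hV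

lemma isPiSystem_iterCyls : IsPiSystem (iterCyls V) := by
  have key : ∀ {n m u u'} {ξ₀ ξ₀' ξ : Bnd I}, n ≤ m → iter V n ξ₀ = .inl u →
      iter V m ξ₀' = .inl u' → ξ ∈ cyl u → ξ ∈ cyl u' → cyl u' ⊆ cyl u := by
    intro n m u u' ξ₀ ξ₀' ξ hnm hu hu' hξ hξ'
    obtain ⟨x, hx, hxu'⟩ := exists_iter_eq_inl_dvd_of_le hnm
      (iter_eq_inl_of_mem_cyl hsymm hirr hCF hconc hconcInj hsubEx hV hu' hξ')
    obtain rfl : u = x := Sum.inl.inj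
      ((iter_eq_inl_of_mem_cyl hsymm hirr hCF hconc hconcInj hsubEx hV hu hξ).symm.trans hx)
    exact cyl_anti hsymm hirr hCF hxu'
  rintro _ ⟨n, u, ⟨ξ₀, hu⟩, rfl⟩ _ ⟨m, u', ⟨ξ₀', hu'⟩, rfl⟩ ⟨ξ, hξ, hξ'⟩
  rcases le_total n m with hnm | hmn
  · exact ⟨m, u', ⟨ξ₀', hu'⟩, (Set.inter_eq_right.2 (key hnm hu hu' hξ hξ')).symm⟩
  · exact ⟨n, u, ⟨ξ₀, hu⟩, (Set.inter_eq_left.2 (key hmn hu' hu hξ' hξ)).symm⟩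

/-- On the cylinder of a value `u` of `Vₙ`, the `n`-th iterate of `θ_V` is `ξ ↦ ξ - u`. -/
lemma inter_cyl_eq_of_preimage_shiftV_eq {s : Set (Bnd I)} (hs : shiftV V ⁻¹' s = s) {n : ℕ}
    {u : Heap I} {ξ₀ : Bnd I} (hu : iter V n ξ₀ = .inl u) :
    s ∩ cyl u = cyl u ∩ (subB · u) ⁻¹' s := by
  have hsn : (shiftV V)^[n] ⁻¹' s = s := Function.IsFixedPt.preimage_iterate hs n
  ext ξ
  refine and_comm.trans (and_congr_right fun hξ => ?_)
  rw [Set.mem_preimage, ← iterate_shiftV_of_iter_eq_inl hsymm hirr hCF hconc hconcInj hsubEx hV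
    (iter_eq_inl_of_mem_cyl hsymm hirr hCF hconc hconcInj hsubEx hV hu hξ)]
  exact (Set.ext_iff.1 hsn ξ).symm

lemma measure_inter_eq_mul_of_measurableSet_iterCyls [Fintype S] (hP : IsBernoulli P)
    {s : Set (Bnd I)} (hsm : MeasurableSet s) (hs : shiftV V ⁻¹' s = s) {B : Set (Bnd I)}
    (hB : MeasurableSet[MeasurableSpace.generateFrom (iterCyls V)] B) :
    P (s ∩ B) = P s * P B := by
  have := hP.1
  have hindep : IndepSets {s} (iterCyls V) P := by
    rw [IndepSets_iff]
    rintro _ _ rfl ⟨n, u, ⟨ξ₀, hu⟩, rfl⟩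
    rw [inter_cyl_eq_of_preimage_shiftV_eq hsymm hirr hCF hconc hconcInj hsubEx hV hs hu,
      measure_cyl_inter_preimage_subB hsymm hirr hCF hconc hconcInj hsubEx hP u hsm, mul_comm]
  exact (Indep_iff _ _ P).1
    (hindep.indep' (fun _ h => Set.mem_singleton_iff.1 h ▸ hsm)
      (fun _ => measurableSet_of_mem_iterCyls) (IsPiSystem.singleton s) (isPiSystem_iterCyls hsymm hirr hCF hconc hconcInj hsubEx hV))
    s B (MeasurableSpace.measurableSet_generateFrom rfl) hB

lemma ae_iter_eq_inl [Fintype S] (hP : IsBernoulli P) (hfin : ∀ᵐ ξ ∂P, ∃ x, V ξ = .inl x) :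
    ∀ᵐ ξ ∂P, ∀ n, ∃ u, iter V n ξ = .inl u := by
  refine ae_all_iff.2 fun n => ?_
  induction n with
  | zero => exact ae_of_all _ fun ξ => ⟨1, rfl⟩
  | succ n ih =>
    have hshift := ((measurePreserving_shiftV hsymm hirr hCF hconc hconcInj hsubEx hV hP
      hfin).iterate n).quasiMeasurePreserving.ae hfin
    filter_upwards [ih, hshift] with ξ ⟨x, hx⟩ ⟨y, hy⟩
    rw [iterate_shiftV_of_iter_eq_inl hsymm hirr hCF hconc hconcInj hsubEx hV hx] at hy
    exact ⟨x * y, iter_succ_of_eq_inl hx hy⟩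

/-- `B` collects the cylinders of the values `Vₙ(ξ)` above `x`: by exhaustiveness and the
compactness of finite heaps, almost every `ξ ∈ ↑x` lies in one of them. -/
lemma exists_measurableSet_iterCyls_ae_eq_cyl [Fintype S] (hP : IsBernoulli P)
    (hexh : Exhaustive P V) (x : Heap I) :
    ∃ B, MeasurableSet[MeasurableSpace.generateFrom (iterCyls V)] B ∧ B =ᵐ[P] cyl x := by
  refine ⟨⋃ n, ⋃ u ∈ {u | (∃ ξ, iter V n ξ = .inl u) ∧ x ∣ u}, cyl u,
    .iUnion fun n => .biUnion (Set.to_countable _) fun u hu =>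
      MeasurableSpace.measurableSet_generateFrom ⟨n, u, hu.1, rfl⟩, ?_⟩
  refine Filter.EventuallyLE.antisymm (LE.le.eventuallyLE (Set.iUnion_subset fun n =>
    Set.iUnion₂_subset fun u hu => cyl_anti hsymm hirr hCF hu.2)) ?_
  filter_upwards [ae_iter_eq_inl hsymm hirr hCF hconc hconcInj hsubEx hV hP hexh.1, hexh.2]
    with ξ hfin ⟨hub, hlub⟩ hξ
  choose u hu using hfin
  have hmono : ∀ m, u m ∣ u (m + 1) := fun m => by
    obtain ⟨x', y, hx', -, hxy⟩ := exists_of_iter_succ_eq_inl (hu (m + 1))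
    rw [hxy, Sum.inl.inj ((hu m).symm.trans hx')]
    exact dvd_mul_right _ _
  obtain ⟨m, hm⟩ := exists_ppSeq_dvd_of_isLUB hsymm hirr hCF hmono (fun m => hu m ▸ hub m)
    (fun ζ h => hlub ζ fun n => hu n ▸ h n) (height x)
  exact Set.mem_iUnion.2 ⟨m, Set.mem_iUnion₂.2 ⟨u m,
    ⟨⟨ξ, hu m⟩, dvd_trans (dvd_ppSeq_of_mem_cyl hCF hξ le_rfl) hm⟩,
    mem_cyl_of_iter_eq_inl hsymm hirr hCF hconc hconcInj hsubEx hV (hu m)⟩⟩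

theorem preErgodic_shiftV [Fintype S] (hP : IsBernoulli P) (hexh : Exhaustive P V) :
    PreErgodic (shiftV V) P := by
  have := hP.1
  refine ⟨fun s hsm hs => ?_⟩
  have hrestrict : P.restrict s = P s • P := ext_of_cyl hsymm hirr hCF fun x => by
    obtain ⟨B, hB, hBx⟩ :=
      exists_measurableSet_iterCyls_ae_eq_cyl hsymm hirr hCF hconc hconcInj hsubEx hV hP hexh x
    rw [Measure.restrict_apply (measurableSet_cyl x), Measure.smul_apply, smul_eq_mul,
      Set.inter_comm, ← measure_congr ((ae_eq_refl s).inter hBx), ← measure_congr hBx]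
    exact measure_inter_eq_mul_of_measurableSet_iterCyls hsymm hirr hCF hconc hconcInj hsubEx hV
      hP hsm hs hB
  have hself : P (s ∩ s) = P s * P s := by
    rw [← Measure.restrict_apply hsm, hrestrict, Measure.smul_apply, smul_eq_mul]
  rcases measure_eq_zero_or_one_of_indepSet_self
      ((indepSet_iff_measure_inter_eq_mul hsm hsm P).2 hself) with h | h
  · exact eventuallyConst_set'.2 (.inl (ae_eq_empty.2 h))
  · exact eventuallyConst_set'.2 (.inr (ae_eq_univ.2 ((prob_compl_eq_zero_iff hsm).2 h)))

end Ergodicity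

end Development

theorem shift_measurePreserving_and_ergodic_general
    {S : Type} [Fintype S] (I : S → S → Prop)
    (hsymm : ∀ a b : S, I a b → I b a)
    (hirr : ∀ a : S, ¬ I a a)
    (hCF : ∀ x : Heap I, ∃! c : ℕ → Cl I, CFprop I c x)
    (hconc : ∀ (x : Heap I) (ξ : Bnd I), ∃ ζ : Bnd I, IsConc x ξ (Sum.inr ζ))
    (hconcInj : ∀ (x : Heap I) (ζ ζ' : Bnd I), concB x ζ = concB x ζ' → ζ = ζ')
    (hsubEx : ∀ (x : Heap I) (ξ : Bnd I), ξ ∈ cyl x → ∃ ζ : Bnd I, concB x ζ = ξ)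
    (P : Measure (Bnd I)) (hP : IsBernoulli P)
    (V : Bnd I → MB I) (hV : IsAST V) (hexh : Exhaustive P V) :
    MeasurePreserving (shiftV V) P P ∧ Ergodic (shiftV V) P := by
  have hMP := measurePreserving_shiftV hsymm hirr hCF hconc hconcInj hsubEx hV hP hexh.1
  exact ⟨hMP, hMP, preErgodic_shiftV hsymm hirr hCF hconc hconcInj hsubEx hV hP hexh⟩

theorem shift_measurePreserving_and_ergodic
    {S : Type} [Fintype S] [DecidableEq S] (I : S → S → Prop)
    (hsymm : ∀ a b : S, I a b → I b a)
    (hirr : ∀ a : S, ¬ I a a)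
    (hconn : ∀ a b : S, Relation.ReflTransGen (fun x y : S => x ≠ y ∧ ¬ I x y) a b)
    (hcard : 1 < Fintype.card S)
    (hCF : ∀ x : Heap I, ∃! c : ℕ → Cl I, CFprop I c x)
    (hconc : ∀ (x : Heap I) (ξ : Bnd I), ∃ ζ : Bnd I, IsConc x ξ (Sum.inr ζ))
    (hconcInj : ∀ (x : Heap I) (ζ ζ' : Bnd I), concB x ζ = concB x ζ' → ζ = ζ')
    (hsubEx : ∀ (x : Heap I) (ξ : Bnd I), ξ ∈ cyl x → ∃ ζ : Bnd I, concB x ζ = ξ)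
    (P : Measure (Bnd I)) (hP : IsBernoulli P)
    (V : Bnd I → MB I) (hV : IsAST V) (hexh : Exhaustive P V) :
    MeasurePreserving (shiftV V) P P ∧ Ergodic (shiftV V) P :=
  shift_measurePreserving_and_ergodic_general I hsymm hirr hCF hconc hconcInj hsubEx P hP V hV hexh

end HeapPaper
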